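/- arXiv:2208.01378 — 2 statements merged into one kernel-verified Lean document; each statement's English description precedes it below -/
import Mathlib

section
/- In the homogeneous two-compartment system with μ(t) = μ₀ e^{−t/τ} (μ₀, τ > 0), the intracellular concentration C_RE(t) converges as t → ∞ to C_RE(∞) = C_RE(0) + (C_E(0) − C_RE(0))·ε·(1 − exp(−μ₀τ/ε))·(stated explicitly: C_RE(t) = C_RE(0) + ε(C_E(0)−C_RE(0))(1 − exp(−(μ₀τ/ε)(1 − e^{−t/τ})))), and this limit is strictly less than the conserved mean ε C_E(0) + (1−ε) C_RE(0) when C_E(0) > C_RE(0). -/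
/-!
The mean `ε C_E + (1 - ε) C_RE` is conserved, while the gap `D = C_E - C_RE` solves the linear
equation `D' = -(μ/ε) D`, so `D(t) = D(0) exp(-M(t)/ε)` with `M(t) = ∫₀ᵗ μ = μ₀τ(1 - e^{-t/τ})`.
Since `C_RE = (mean) - ε D`, this gives the closed form, and as `M(t) → μ₀τ` the limit falls short
of the mean by `ε D(0) exp(-μ₀τ/ε) > 0`.
-/

open Real Filter Topology

theorem eq_of_hasDerivAt_zero_of_nonneg {f : ℝ → ℝ} (hf : ∀ t, 0 ≤ t → HasDerivAt f 0 t)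
    {t : ℝ} (ht : 0 ≤ t) : f t = f 0 :=
  constant_of_has_deriv_right_zero (fun x hx => (hf x hx.1).continuousAt.continuousWithinAt)
    (fun x hx => (hf x hx.1).hasDerivWithinAt) t ⟨ht, le_rfl⟩

theorem eq_mul_exp_of_hasDerivAt_neg_mul {f A a : ℝ → ℝ}
    (hA : ∀ t, 0 ≤ t → HasDerivAt A (a t) t) (hf : ∀ t, 0 ≤ t → HasDerivAt f (-a t * f t) t)
    {t : ℝ} (ht : 0 ≤ t) : f t = f 0 * exp (A 0 - A t) := by
  have hconst : ∀ s, 0 ≤ s → HasDerivAt (fun s => f s * exp (A s)) 0 s := fun s hs =>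
    ((hf s hs).mul (hA s hs).exp).congr_deriv (by ring)
  have h : f t * exp (A t) = f 0 * exp (A 0) := eq_of_hasDerivAt_zero_of_nonneg hconst ht
  rw [exp_sub, mul_div_assoc', ← h]
  field_simp

section TwoCompartment

variable {ε : ℝ} {μ M CE CRE : ℝ → ℝ}

theorem twoCompartment_mean_eq (hε : ε ≠ 0)
    (hCE : ∀ t, 0 ≤ t → HasDerivAt CE (-((1 - ε) / ε) * μ t * (CE t - CRE t)) t)
    (hCRE : ∀ t, 0 ≤ t → HasDerivAt CRE (μ t * (CE t - CRE t)) t) {t : ℝ} (ht : 0 ≤ t) :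
    ε * CE t + (1 - ε) * CRE t = ε * CE 0 + (1 - ε) * CRE 0 :=
  eq_of_hasDerivAt_zero_of_nonneg (f := fun t => ε * CE t + (1 - ε) * CRE t)
    (fun s hs => (((hCE s hs).const_mul ε).add ((hCRE s hs).const_mul (1 - ε))).congr_deriv
      (by field_simp; ring)) ht

theorem twoCompartment_sub_eq (hε : ε ≠ 0) (hM : ∀ t, 0 ≤ t → HasDerivAt M (μ t) t)
    (hCE : ∀ t, 0 ≤ t → HasDerivAt CE (-((1 - ε) / ε) * μ t * (CE t - CRE t)) t)
    (hCRE : ∀ t, 0 ≤ t → HasDerivAt CRE (μ t * (CE t - CRE t)) t) {t : ℝ} (ht : 0 ≤ t) :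
    CE t - CRE t = (CE 0 - CRE 0) * exp ((M 0 - M t) / ε) := by
  have h := eq_mul_exp_of_hasDerivAt_neg_mul (f := CE - CRE) (A := fun t => M t / ε)
    (fun s hs => (hM s hs).div_const ε)
    (fun s hs => ((hCE s hs).sub (hCRE s hs)).congr_deriv (by simp only [Pi.sub_apply]; field_simp; ring))
    ht
  simpa only [Pi.sub_apply, sub_div] using h

theorem twoCompartment_intracellular_eq (hε : ε ≠ 0) (hM : ∀ t, 0 ≤ t → HasDerivAt M (μ t) t)
    (hM0 : M 0 = 0)
    (hCE : ∀ t, 0 ≤ t → HasDerivAt CE (-((1 - ε) / ε) * μ t * (CE t - CRE t)) t)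
    (hCRE : ∀ t, 0 ≤ t → HasDerivAt CRE (μ t * (CE t - CRE t)) t) {t : ℝ} (ht : 0 ≤ t) :
    CRE t = CRE 0 + ε * (CE 0 - CRE 0) * (1 - exp (-M t / ε)) := by
  have hmean := twoCompartment_mean_eq hε hCE hCRE ht
  have hsub := twoCompartment_sub_eq hε hM hCE hCRE ht
  rw [hM0, zero_sub] at hsub
  linear_combination hmean - ε * hsub

end TwoCompartment

theorem hasDerivAt_mul_one_sub_exp_neg_div (μ₀ : ℝ) {τ : ℝ} (hτ : τ ≠ 0) (t : ℝ) :
    HasDerivAt (fun t => μ₀ * τ * (1 - exp (-t / τ))) (μ₀ * exp (-t / τ)) t := by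
  have hlin : HasDerivAt (fun t : ℝ => -t / τ) (-1 / τ) t := (hasDerivAt_neg t).div_const τ
  exact (((hasDerivAt_const t 1).sub hlin.exp).const_mul (μ₀ * τ)).congr_deriv
    (by field_simp; ring)

theorem tendsto_mul_one_sub_exp_neg_div (μ₀ : ℝ) {τ : ℝ} (hτ : 0 < τ) :
    Tendsto (fun t => μ₀ * τ * (1 - exp (-t / τ))) atTop (𝓝 (μ₀ * τ)) := by
  have hexp : Tendsto (fun t => exp (-t / τ)) atTop (𝓝 0) := by
    simp only [neg_div]
    exact tendsto_exp_atBot.comp (tendsto_neg_atTop_atBot.comp (tendsto_id.atTop_div_const hτ))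
  simpa using (hexp.const_sub 1).const_mul (μ₀ * τ)

theorem stmt_10_general (ε μ0 τ : ℝ) (hε : ε ∈ Set.Ioo (0 : ℝ) 1) (hτ : 0 < τ)
    (CE CRE : ℝ → ℝ)
    (hCE : ∀ t : ℝ, 0 ≤ t →
      HasDerivAt CE (-((1 - ε) / ε) * (μ0 * Real.exp (-t / τ)) * (CE t - CRE t)) t)
    (hCRE : ∀ t : ℝ, 0 ≤ t →
      HasDerivAt CRE ((μ0 * Real.exp (-t / τ)) * (CE t - CRE t)) t) :
    (∀ t : ℝ, 0 ≤ t →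
      CRE t = CRE 0 + ε * (CE 0 - CRE 0) *
        (1 - Real.exp (-(μ0 * τ / ε) * (1 - Real.exp (-t / τ))))) ∧
    Filter.Tendsto CRE Filter.atTop
      (nhds (CRE 0 + ε * (CE 0 - CRE 0) * (1 - Real.exp (-(μ0 * τ / ε))))) ∧
    (CE 0 > CRE 0 →
      CRE 0 + ε * (CE 0 - CRE 0) * (1 - Real.exp (-(μ0 * τ / ε))) <
        ε * CE 0 + (1 - ε) * CRE 0) := by
  set M : ℝ → ℝ := fun t => μ0 * τ * (1 - exp (-t / τ))
  have hclosed : ∀ t, 0 ≤ t → CRE t = CRE 0 + ε * (CE 0 - CRE 0) * (1 - exp (-M t / ε)) :=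
    fun t ht => twoCompartment_intracellular_eq hε.1.ne'
      (fun s _ => hasDerivAt_mul_one_sub_exp_neg_div μ0 hτ.ne' s) (by simp) hCE hCRE ht
  have hexponent : ∀ t, -M t / ε = -(μ0 * τ / ε) * (1 - exp (-t / τ)) := fun t => by
    simp only [M]; ring
  refine ⟨fun t ht => by rw [hclosed t ht, hexponent], ?_, fun hgt => ?_⟩
  · have hlim : Tendsto (fun t => CRE 0 + ε * (CE 0 - CRE 0) * (1 - exp (-M t / ε))) atTop
        (𝓝 (CRE 0 + ε * (CE 0 - CRE 0) * (1 - exp (-(μ0 * τ) / ε)))) :=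
      ((continuous_const.add (continuous_const.mul (continuous_const.sub
        (continuous_exp.comp (continuous_neg.div_const ε))))).tendsto (μ0 * τ)).comp
        (tendsto_mul_one_sub_exp_neg_div μ0 hτ)
    rw [neg_div] at hlim
    exact hlim.congr' (eventually_ge_atTop 0 |>.mono fun t ht => (hclosed t ht).symm)
  · have hgap : 0 < ε * (CE 0 - CRE 0) * exp (-(μ0 * τ / ε)) :=
      mul_pos (mul_pos hε.1 (sub_pos.2 hgt)) (exp_pos _)
    linarith

/-- With μ(t) = μ₀ e^{−t/τ}, the intracellular concentration has the stated closed form,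
converges to C_RE(0) + ε(C_E(0) − C_RE(0))(1 − exp(−μ₀τ/ε)), and this limit is strictly
below the conserved mean when C_E(0) > C_RE(0). -/
theorem stmt_10 (ε μ0 τ : ℝ) (hε : ε ∈ Set.Ioo (0 : ℝ) 1) (hμ0 : 0 < μ0) (hτ : 0 < τ)
    (CE CRE : ℝ → ℝ)
    (hCE : ∀ t : ℝ, 0 ≤ t →
      HasDerivAt CE (-((1 - ε) / ε) * (μ0 * Real.exp (-t / τ)) * (CE t - CRE t)) t)
    (hCRE : ∀ t : ℝ, 0 ≤ t →
      HasDerivAt CRE ((μ0 * Real.exp (-t / τ)) * (CE t - CRE t)) t) :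
    (∀ t : ℝ, 0 ≤ t →
      CRE t = CRE 0 + ε * (CE 0 - CRE 0) *
        (1 - Real.exp (-(μ0 * τ / ε) * (1 - Real.exp (-t / τ))))) ∧
    Filter.Tendsto CRE Filter.atTop
      (nhds (CRE 0 + ε * (CE 0 - CRE 0) * (1 - Real.exp (-(μ0 * τ / ε))))) ∧
    (CE 0 > CRE 0 →
      CRE 0 + ε * (CE 0 - CRE 0) * (1 - Real.exp (-(μ0 * τ / ε))) <
        ε * CE 0 + (1 - ε) * CRE 0) :=
  stmt_10_general ε μ0 τ hε hτ CE CRE hCE hCRE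
end

section
/- In the homogeneous two-compartment system with nonnegative continuous μ, if C_E(0) ≥ C_RE(0) ≥ 0 then C_RE(t) is nondecreasing, C_E(t) is nonincreasing, and C_RE(t) ≤ C_E(t) for all t ≥ 0. -/
/-!
The gap `D = C_E - C_RE` solves `D' = -(μ/ε) D`. Wherever `D < 0` this forces `D' ≥ 0`, so `D`,
starting from `D 0 ≥ 0`, never becomes negative; then `C_RE' = μ D ≥ 0` and
`C_E' = -((1-ε)/ε) μ D ≤ 0`.
-/

open Set

/- Past the last point `c ≤ b` with `f c ≥ 0`, `f` is negative, hence nondecreasing, so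
`f b ≥ f c`. -/
theorem nonneg_of_deriv_nonneg_where_neg {f f' : ℝ → ℝ} {a b : ℝ} (hab : a ≤ b)
    (hf : ContinuousOn f (Icc a b)) (hf' : ∀ x ∈ Ioo a b, HasDerivAt f (f' x) x)
    (hneg : ∀ x ∈ Ioo a b, f x < 0 → 0 ≤ f' x) (ha : 0 ≤ f a) : 0 ≤ f b := by
  by_contra! hb
  have hS : IsCompact (Icc a b ∩ f ⁻¹' Ici 0) :=
    isCompact_Icc.of_isClosed_subset (hf.preimage_isClosed_of_isClosed isClosed_Icc isClosed_Ici)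
      inter_subset_left
  obtain ⟨c, ⟨⟨hac, hcb⟩, hc⟩, hc_max⟩ := hS.exists_isGreatest ⟨a, ⟨left_mem_Icc.2 hab, ha⟩⟩
  have hneg_after : ∀ x ∈ Ioc c b, f x < 0 := fun x hx => by
    by_contra! hx0
    exact (hx.1.trans_le (hc_max ⟨⟨hac.trans hx.1.le, hx.2⟩, hx0⟩)).false
  have hsub : Ioo c b ⊆ Ioo a b := Ioo_subset_Ioo_left hac
  have hmono : MonotoneOn f (Icc c b) := by
    refine monotoneOn_of_hasDerivWithinAt_nonneg (f' := f') (convex_Icc c b)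
      (hf.mono (Icc_subset_Icc_left hac)) (fun x hx => ?_) (fun x hx => ?_) <;>
      rw [interior_Icc] at hx
    · exact (hf' x (hsub hx)).hasDerivWithinAt
    · exact hneg x (hsub hx) (hneg_after x (Ioo_subset_Ioc_self hx))
  have hfc_le : f c ≤ f b := hmono (left_mem_Icc.2 hcb) (right_mem_Icc.2 hcb) hcb
  exact hb.not_ge (mem_Ici.1 hc |>.trans hfc_le)

theorem nonneg_of_hasDerivAt_eq_neg_mul_self {D k : ℝ → ℝ} {a : ℝ} (hk : ∀ t, a ≤ t → 0 ≤ k t)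
    (hD : ∀ t, a ≤ t → HasDerivAt D (-k t * D t) t) (ha : 0 ≤ D a) :
    ∀ t, a ≤ t → 0 ≤ D t := fun _ ht =>
  nonneg_of_deriv_nonneg_where_neg ht
    (fun x hx => (hD x hx.1).continuousAt.continuousWithinAt) (fun x hx => hD x hx.1.le)
    (fun x hx hDx => mul_nonneg_of_nonpos_of_nonpos (neg_nonpos.2 (hk x hx.1.le)) hDx.le) ha

theorem monotoneOn_Ici_of_hasDerivAt_nonneg {f f' : ℝ → ℝ} {a : ℝ}
    (hf : ∀ x, a ≤ x → HasDerivAt f (f' x) x) (hf' : ∀ x, a ≤ x → 0 ≤ f' x) :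
    MonotoneOn f (Ici a) := by
  refine monotoneOn_of_hasDerivWithinAt_nonneg (f' := f') (convex_Ici a)
    (fun x hx => (hf x hx).continuousAt.continuousWithinAt) (fun x hx => ?_) (fun x hx => ?_) <;>
    rw [interior_Ici] at hx
  · exact (hf x hx.le).hasDerivWithinAt
  · exact hf' x hx.le

theorem antitoneOn_Ici_of_hasDerivAt_nonpos {f f' : ℝ → ℝ} {a : ℝ}
    (hf : ∀ x, a ≤ x → HasDerivAt f (f' x) x) (hf' : ∀ x, a ≤ x → f' x ≤ 0) :
    AntitoneOn f (Ici a) := by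
  have hneg_mono := monotoneOn_Ici_of_hasDerivAt_nonneg (fun x hx => (hf x hx).neg)
    (fun x hx => neg_nonneg.2 (hf' x hx))
  exact fun x hx y hy hxy => neg_le_neg_iff.1 (hneg_mono hx hy hxy)

theorem stmt_11_general (ε : ℝ) (hε : ε ∈ Set.Ioo (0 : ℝ) 1)
    (μ CE CRE : ℝ → ℝ)
    (hμ0 : ∀ t : ℝ, 0 ≤ t → 0 ≤ μ t)
    (hCE : ∀ t : ℝ, 0 ≤ t →
      HasDerivAt CE (-((1 - ε) / ε) * μ t * (CE t - CRE t)) t)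
    (hCRE : ∀ t : ℝ, 0 ≤ t → HasDerivAt CRE (μ t * (CE t - CRE t)) t)
    (h0 : CRE 0 ≤ CE 0) :
    MonotoneOn CRE (Set.Ici 0) ∧ AntitoneOn CE (Set.Ici 0) ∧
      ∀ t : ℝ, 0 ≤ t → CRE t ≤ CE t := by
  obtain ⟨hε0, hε1⟩ := hε
  have hgap_deriv : ∀ t, 0 ≤ t →
      HasDerivAt (fun s => CE s - CRE s) (-(μ t / ε) * (CE t - CRE t)) t := fun t ht =>
    ((hCE t ht).sub (hCRE t ht)).congr_deriv (by field_simp; ring)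
  have hgap : ∀ t, 0 ≤ t → 0 ≤ CE t - CRE t :=
    nonneg_of_hasDerivAt_eq_neg_mul_self (fun t ht => div_nonneg (hμ0 t ht) hε0.le) hgap_deriv
      (sub_nonneg.2 h0)
  have hrate : 0 ≤ (1 - ε) / ε := div_nonneg (by linarith) hε0.le
  refine ⟨monotoneOn_Ici_of_hasDerivAt_nonneg hCRE fun t ht => mul_nonneg (hμ0 t ht) (hgap t ht),
    antitoneOn_Ici_of_hasDerivAt_nonpos hCE fun t ht => ?_, fun t ht => sub_nonneg.1 (hgap t ht)⟩
  have hloss := mul_nonneg (mul_nonneg hrate (hμ0 t ht)) (hgap t ht)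
  linarith

/-- If C_E(0) ≥ C_RE(0) ≥ 0, then C_RE is nondecreasing, C_E is nonincreasing, and
C_RE(t) ≤ C_E(t) for all t ≥ 0. -/
theorem stmt_11 (ε : ℝ) (hε : ε ∈ Set.Ioo (0 : ℝ) 1)
    (μ CE CRE : ℝ → ℝ) (hμc : ContinuousOn μ (Set.Ici 0))
    (hμ0 : ∀ t : ℝ, 0 ≤ t → 0 ≤ μ t)
    (hCE : ∀ t : ℝ, 0 ≤ t →
      HasDerivAt CE (-((1 - ε) / ε) * μ t * (CE t - CRE t)) t)
    (hCRE : ∀ t : ℝ, 0 ≤ t → HasDerivAt CRE (μ t * (CE t - CRE t)) t)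
    (h0 : CRE 0 ≤ CE 0) (h0' : 0 ≤ CRE 0) :
    MonotoneOn CRE (Set.Ici 0) ∧ AntitoneOn CE (Set.Ici 0) ∧
      ∀ t : ℝ, 0 ≤ t → CRE t ≤ CE t :=
  stmt_11_general ε hε μ CE CRE hμ0 hCE hCRE h0
end
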